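/- Conversely, if ‖u‖_{X^{t,q}} < ∞ almost surely for the Besov-type random series u = Σⱼ γⱼξⱼφⱼ, then t < s − d/q. -/

import Mathlib

/-!
Truncate the terms: `Z j = min (|ξ j|^q, 1)` are i.i.d., bounded, and have positive mean `m`
because the law of `ξ j` has a density. By the strong law of large numbers their Cesàro means
tend to `m`, and a nonnegative sequence with Cesàro means tending to `m > 0` has divergent
harmonically weighted series `∑ Z j / (j + 1)` (compare the blocks `[n, 2n)`).
If `t ≥ s - d/q`, the `j`-th term of `‖u‖_{X^{t,q}}^q` is at least `δ⁻¹ |ξ j|^q / j ≥ δ⁻¹ Z j / j`,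
so the norm is almost surely infinite.
-/

open MeasureTheory ProbabilityTheory Filter Finset Topology

lemma sub_half_cesaro_le_sum_Ico {z : ℕ → ℝ} (hz : ∀ j, 0 ≤ z j) (n : ℕ) :
    (∑ i ∈ range (2 * n), z i) / (2 * n : ℕ) - (∑ i ∈ range n, z i) / n / 2 ≤
      ∑ i ∈ Ico n (2 * n), ((i : ℝ) + 1)⁻¹ * z i := by
  have hhalf : (∑ i ∈ range n, z i) / n / 2 = (∑ i ∈ range n, z i) / (2 * n : ℕ) := by
    push_cast
    ring
  rw [hhalf, div_sub_div_same, ← sum_Ico_eq_sub _ (by omega), div_eq_mul_inv, sum_mul]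
  refine sum_le_sum fun i hi => ?_
  have hi : (i : ℝ) + 1 ≤ (2 * n : ℕ) := by exact_mod_cast (mem_Ico.1 hi).2
  rw [mul_comm]
  exact mul_le_mul_of_nonneg_right (inv_anti₀ (by positivity) hi) (hz i)

theorem not_summable_inv_mul_of_tendsto_cesaro {z : ℕ → ℝ} (hz : ∀ j, 0 ≤ z j) {m : ℝ}
    (hm : 0 < m) (hlim : Tendsto (fun n : ℕ => (∑ i ∈ range n, z i) / n) atTop (𝓝 m)) :
    ¬ Summable fun j : ℕ => ((j : ℝ) + 1)⁻¹ * z j := by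
  intro hsum
  have hdouble : Tendsto (fun n : ℕ => 2 * n) atTop atTop :=
    tendsto_id.const_mul_atTop' two_pos
  have hblocks : Tendsto (fun n : ℕ => ∑ i ∈ Ico n (2 * n), ((i : ℝ) + 1)⁻¹ * z i) atTop (𝓝 0) := by
    have hpartial := hsum.hasSum.tendsto_sum_nat
    have hdiff := (hpartial.comp hdouble).sub hpartial
    rw [sub_self] at hdiff
    exact hdiff.congr fun n => (sum_Ico_eq_sub _ (by omega)).symm
  have hmeans := (hlim.comp hdouble).sub (hlim.div_const 2)
  have := le_of_tendsto_of_tendsto' hmeans hblocks (sub_half_cesaro_le_sum_Ico hz)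
  linarith

section

variable {Ω : Type*} {mΩ : MeasurableSpace Ω} {P : Measure Ω}

theorem ae_not_summable_inv_mul_of_integral_pos {X : ℕ → Ω → ℝ} (hX : ∀ j ω, 0 ≤ X j ω)
    (hint : Integrable (X 0) P) (hindep : Pairwise fun i j => X i ⟂ᵢ[P] X j)
    (hident : ∀ i, IdentDistrib (X i) (X 0) P P) (hpos : 0 < P[X 0]) :
    ∀ᵐ ω ∂P, ¬ Summable fun j : ℕ => ((j : ℝ) + 1)⁻¹ * X j ω := by
  filter_upwards [strong_law_ae_real X hint hindep hident] with ω hω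
  exact not_summable_inv_mul_of_tendsto_cesaro (fun j => hX j ω) hpos hω

theorem ae_not_summable_inv_mul_abs_rpow [IsFiniteMeasure P] {ξ : ℕ → Ω → ℝ}
    (hindep : Pairwise fun i j => ξ i ⟂ᵢ[P] ξ j) (hident : ∀ i, IdentDistrib (ξ i) (ξ 0) P P)
    (hξ0 : ¬ ξ 0 =ᵐ[P] 0) {q : ℝ} (hq : 0 < q) :
    ∀ᵐ ω ∂P, ¬ Summable fun j : ℕ => ((j : ℝ) + 1)⁻¹ * |ξ j ω| ^ q := by
  -- truncating at `1` makes the strong law applicable without any moment assumption on `ξ`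
  set g : ℝ → ℝ := fun x => min (|x| ^ q) 1
  have hg : Measurable g := by fun_prop
  have hg0 : ∀ x, 0 ≤ g x := fun x => le_min (by positivity) zero_le_one
  have hint : Integrable (fun ω => g (ξ 0 ω)) P := by
    refine .of_bound (hg.comp_aemeasurable (hident 0).aemeasurable_fst).aestronglyMeasurable 1
      (.of_forall fun ω => ?_)
    rw [Real.norm_eq_abs, abs_of_nonneg (hg0 _)]
    exact min_le_right _ _
  have hsupport : Function.support (fun ω => g (ξ 0 ω)) = Function.support (ξ 0) := by
    ext ω
    refine ⟨fun h h0 => h (by simp [g, h0, hq.ne']), fun h => ?_⟩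
    exact (lt_min (Real.rpow_pos_of_pos (abs_pos.2 h) q) one_pos).ne'
  have hmean : 0 < P[fun ω => g (ξ 0 ω)] := by
    rw [integral_pos_iff_support_of_nonneg (fun ω => hg0 _) hint, hsupport, pos_iff_ne_zero]
    exact fun h => hξ0 ((Measure.measure_support_eq_zero_iff P).1 h)
  filter_upwards [ae_not_summable_inv_mul_of_integral_pos (X := fun j ω => g (ξ j ω))
    (fun j ω => hg0 _) hint (fun i j hij => (hindep hij).comp hg hg)
    (fun i => (hident i).comp hg) hmean] with ω hω hsum
  exact hω (Summable.of_nonneg_of_le (fun j => mul_nonneg (by positivity) (hg0 _))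
    (fun j => mul_le_mul_of_nonneg_left (min_le_left _ _) (by positivity)) hsum)

theorem not_ae_eq_zero_of_map_absolutelyContinuous [NeZero P] {X : Ω → ℝ}
    (hX : AEMeasurable X P) (hac : P.map X ≪ volume) : ¬ X =ᵐ[P] 0 := by
  intro hzero
  have hatom : P (X ⁻¹' {0}) = 0 := by
    rw [← Measure.map_apply_of_aemeasurable hX (measurableSet_singleton 0)]
    exact hac Real.volume_singleton
  obtain ⟨ω, hω, hω'⟩ := (hzero.and (measure_eq_zero_iff_ae_notMem.1 hatom)).exists
  exact hω' hω

end

lemma besov_term_eq {n δ q : ℝ} (hn : 0 < n) (hδ : 0 < δ) (hq : 0 < q) (d s t x : ℝ) :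
    n ^ (t * q / d + q / 2 - 1) * |n ^ (-(s / d + 1 / 2 - 1 / q)) * δ ^ (-(1 / q)) * x| ^ q =
      δ⁻¹ * (n ^ ((t - s) * q / d) * |x| ^ q) := by
  rw [abs_mul, abs_mul, abs_of_pos (by positivity), abs_of_pos (by positivity),
    Real.mul_rpow (by positivity) (abs_nonneg _), Real.mul_rpow (by positivity) (by positivity),
    ← Real.rpow_mul hn.le, ← Real.rpow_mul hδ.le, neg_mul (1 / q), one_div_mul_cancel hq.ne',
    Real.rpow_neg_one]
  have hexp : n ^ (t * q / d + q / 2 - 1) * n ^ (-(s / d + 1 / 2 - 1 / q) * q) =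
      n ^ ((t - s) * q / d) := by
    rw [← Real.rpow_add hn]
    congr 1
    field_simp
    ring
  rw [← hexp]
  ring

theorem besov_prior_finite_norm_implies_regularity
    (d : ℕ) (hd : 0 < d) (q s δ t : ℝ) (hq : 1 ≤ q) (hδ : 0 < δ)
    (c : ℝ)
    (Ω : Type*) [MeasurableSpace Ω] (P : Measure Ω) [IsProbabilityMeasure P]
    (ξ : ℕ → Ω → ℝ) (hξm : ∀ j, Measurable (ξ j))
    (hξindep : iIndepFun ξ P)
    (hξlaw : ∀ j, Measure.map (ξ j) P
      = volume.withDensity fun x => ENNReal.ofReal (c * Real.exp (-|x| ^ q / 2)))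
    (γ : ℕ → ℝ) (hγ : ∀ j : ℕ, γ (j + 1) = (j + 1 : ℝ) ^ (-(s / d + 1 / 2 - 1 / q)) * δ ^ (-(1 / q)))
    (hfin : ∀ᵐ ω ∂P, Summable fun j : ℕ =>
      ((j + 1 : ℝ) ^ (t * q / d + q / 2 - 1)) * |γ (j + 1) * ξ (j + 1) ω| ^ q) :
    t < s - d / q := by
  by_contra! hts
  have hq0 : 0 < q := by linarith
  have hd0 : (0 : ℝ) < d := by exact_mod_cast hd
  have hexp : -1 ≤ (t - s) * q / d := by
    rw [le_div_iff₀ hd0]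
    nlinarith [mul_le_mul_of_nonneg_right hts hq0.le, div_mul_cancel₀ (d : ℝ) hq0.ne']
  have hdiv : ∀ᵐ ω ∂P, ¬ Summable fun j : ℕ => ((j : ℝ) + 1)⁻¹ * |ξ (j + 1) ω| ^ q :=
    ae_not_summable_inv_mul_abs_rpow (ξ := fun j => ξ (j + 1))
      (fun i j hij => hξindep.indepFun (by omega))
      (fun i => ⟨(hξm _).aemeasurable, (hξm _).aemeasurable, by rw [hξlaw, hξlaw]⟩)
      (not_ae_eq_zero_of_map_absolutelyContinuous (hξm 1).aemeasurable
        (by rw [hξlaw 1]; exact withDensity_absolutelyContinuous _ _)) hq0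
  obtain ⟨ω, hsum, hnot⟩ := (hfin.and hdiv).exists
  refine hnot (Summable.of_nonneg_of_le (fun j => by positivity) (fun j => ?_) (hsum.mul_left δ))
  rw [hγ, besov_term_eq (by positivity) hδ hq0, mul_inv_cancel_left₀ hδ.ne']
  refine mul_le_mul_of_nonneg_right ?_ (by positivity)
  rw [← Real.rpow_neg_one]
  exact Real.rpow_le_rpow_of_exponent_le (by simp) hexp
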